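/- With a_0,…,a_{11} the twelve vectors in ℂ⁴ defined via the Fourier matrix of dimension 3 diluted with zeros (as in the table with ω = exp(2πi/3)), the 12×12 matrix Π with entries Π_{ij} = (1/3)⟨a_i, a_j⟩ satisfies Π² = Π and Tr(Π) = 4. -/
import Mathlib

noncomputable def om : ℂ := Complex.exp (2 * Real.pi * Complex.I / 3)

lemma om_ne_zero : om ≠ 0 := Complex.exp_ne_zero _

lemma om_cube : om ^ 3 = 1 := by
  rw [om, ← Complex.exp_nat_mul]
  rw [show (3:ℕ) * (2 * Real.pi * Complex.I / 3) = 2 * Real.pi * Complex.I by push_cast; ring]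
  exact Complex.exp_two_pi_mul_I

lemma om_ne_one : om ≠ 1 := by
  intro h
  rw [om, Complex.exp_eq_one_iff] at h
  obtain ⟨n, hn⟩ := h
  have h2 : (2 * (Real.pi:ℂ) * Complex.I) ≠ 0 := by
    simp [Complex.I_ne_zero, Real.pi_ne_zero, Complex.ofReal_ne_zero]
  have h : (2 * (Real.pi:ℂ) * Complex.I) * (3 * n - 1) = 0 := by
    linear_combination (-3 : ℂ) * hn
  rcases mul_eq_zero.mp h with h | h
  · exact h2 h
  · have h3 : ((3 * n - 1 : ℤ) : ℂ) = 0 := by push_cast; linear_combination h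
    have : (3 * n - 1 : ℤ) = 0 := by exact_mod_cast h3
    omega

lemma om_sum : 1 + om + om ^ 2 = 0 := by
  have h : (om - 1) * (1 + om + om ^ 2) = 0 := by linear_combination om_cube
  rcases mul_eq_zero.mp h with h | h
  · exact absurd (sub_eq_zero.mp h) om_ne_one
  · exact h

lemma conj_om : (starRingEnd ℂ) om = om ^ 2 := by
  have h1 : (starRingEnd ℂ) om = om⁻¹ := by
    rw [om, ← Complex.exp_conj, ← Complex.exp_neg]
    congr 1
    simp [map_div₀, Complex.conj_I, map_ofNat]
    ring
  rw [h1]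
  exact inv_eq_of_mul_eq_one_right (by linear_combination om_cube)

lemma om_sq : om ^ 2 = -om - 1 := by linear_combination om_sum
lemma conj_om' : (starRingEnd ℂ) om = -om - 1 := by rw [conj_om, om_sq]

lemma sqrt3_sq : (((Real.sqrt 3 : ℝ) : ℂ))⁻¹ ^ 2 = 1 / 3 := by
  rw [inv_pow, ← Complex.ofReal_pow]
  norm_num [Real.sq_sqrt]

noncomputable def cohVec4 : Fin 12 → Fin 4 → ℂ :=
  ![(Real.sqrt 3)⁻¹ • ![1, 1, 1, 0],
    (Real.sqrt 3)⁻¹ • ![1, om, om ^ 2, 0],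
    (Real.sqrt 3)⁻¹ • ![1, om ^ 2, om, 0],
    (Real.sqrt 3)⁻¹ • ![0, 1, 1, 1],
    (Real.sqrt 3)⁻¹ • ![0, 1, om, om ^ 2],
    (Real.sqrt 3)⁻¹ • ![0, 1, om ^ 2, om],
    (Real.sqrt 3)⁻¹ • ![1, 0, 1, 1],
    (Real.sqrt 3)⁻¹ • ![om ^ 2, 0, 1, om],
    (Real.sqrt 3)⁻¹ • ![om, 0, 1, om ^ 2],
    (Real.sqrt 3)⁻¹ • ![1, 1, 0, 1],
    (Real.sqrt 3)⁻¹ • ![om, om ^ 2, 0, 1],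
    (Real.sqrt 3)⁻¹ • ![om ^ 2, om, 0, 1]]

noncomputable def cohProj4 : Matrix (Fin 12) (Fin 12) ℂ :=
  Matrix.of fun i j => (1 / 3 : ℂ) * ∑ k, (starRingEnd ℂ) (cohVec4 i k) * cohVec4 j k

noncomputable def Mm : Matrix (Fin 4) (Fin 12) ℂ := Matrix.of fun k i => cohVec4 i k

lemma proj_eq : cohProj4 = (1 / 3 : ℂ) • (Mm.conjTranspose * Mm) := by
  ext i j
  simp [cohProj4, Mm, Matrix.mul_apply, Matrix.conjTranspose_apply]

set_option maxHeartbeats 1600000 in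
lemma gram : Mm * Mm.conjTranspose = (3 : ℂ) • 1 := by
  ext k l
  fin_cases k <;> fin_cases l <;>
    simp [Matrix.mul_apply, Matrix.conjTranspose_apply, Mm, cohVec4, Fin.sum_univ_succ,
        Complex.real_smul, map_mul, Complex.conj_ofReal, om_sq, conj_om', map_sub, map_neg,
        map_one, Matrix.one_apply] <;>
    (ring_nf; try simp only [om_sq, sqrt3_sq]; try ring_nf)

theorem cohProj4_is_projector : cohProj4 * cohProj4 = cohProj4 ∧ cohProj4.trace = 4 := by
  constructor
  · rw [proj_eq, Matrix.smul_mul, Matrix.mul_smul, Matrix.mul_assoc,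
      ← Matrix.mul_assoc Mm Mm.conjTranspose, gram]
    rw [Matrix.smul_mul, Matrix.one_mul, Matrix.mul_smul]
    rw [smul_smul, smul_smul]
    norm_num
  · rw [proj_eq, Matrix.trace_smul, Matrix.trace_mul_comm, gram]
    simp [Matrix.trace_smul, Matrix.trace_one]
    try norm_num
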